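/- Let Q and V₁ be n×k real matrices, each with orthonormal columns (QᵀQ = V₁ᵀV₁ = I_k). Then the smallest singular value of the k×k matrix V₁ᵀQ satisfies σ_min²(V₁ᵀQ) ≥ 1 − ½‖V₁V₁ᵀ − QQᵀ‖_F². -/

import Mathlib

/-!
With `A = (V₁ᵀQ)ᵀ(V₁ᵀQ) = Qᵀ(V₁V₁ᵀ)Q`, expanding the Frobenius norm of the difference of two
rank-`k` projections gives `‖V₁V₁ᵀ - QQᵀ‖_F² = 2k - 2 tr A`, so the claim reads
`σ_min² ≥ tr A - (k - 1)`. Since `V₁V₁ᵀ ≤ 1` in the Loewner order, also `A ≤ 1`, so all `k`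
eigenvalues of `A` are at most `1`; as they sum to `tr A`, each of them, the smallest in
particular, is at least `tr A - (k - 1)`.
-/

open Matrix

noncomputable def frobNorm {m : ℕ} (A : Matrix (Fin m) (Fin m) ℝ) : ℝ :=
  Real.sqrt (∑ i, ∑ j, (A i j) ^ 2)

/-- `eigval A j` is the `j`-th largest eigenvalue (1-indexed) of the symmetric matrix `A`. -/
noncomputable def eigval {m : ℕ} (A : Matrix (Fin m) (Fin m) ℝ) (j : ℕ) : ℝ :=
  if h : A.IsHermitian then
    if hj : m - j < m then (h.eigenvalues ∘ Tuple.sort h.eigenvalues) ⟨m - j, hj⟩ else 0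
  else 0

/-- spectral norm: largest singular value. -/
noncomputable def specNorm {m : ℕ} (A : Matrix (Fin m) (Fin m) ℝ) : ℝ :=
  Real.sqrt (eigval (Aᵀ * A) 1)

/-- `P_{n,k}`: rank-`k` orthogonal projection matrices. -/
def ProjSet (n k : ℕ) : Set (Matrix (Fin n) (Fin n) ℝ) :=
  {X | ∃ Q : Matrix (Fin n) (Fin k) ℝ, Qᵀ * Q = 1 ∧ X = Q * Qᵀ}

/-- The Fantope `F_{n,k}`. -/
def Fantope (n k : ℕ) : Set (Matrix (Fin n) (Fin n) ℝ) :=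
  {X | X.IsSymm ∧ X.PosSemidef ∧ (1 - X).PosSemidef ∧ X.trace = (k : ℝ)}

open scoped MatrixOrder

theorem Finset.sum_sub_card_sub_one_le_of_le_one {ι : Type*} [Fintype ι] {f : ι → ℝ}
    (hf : ∀ i, f i ≤ 1) (j : ι) : ∑ i, f i - (Fintype.card ι - 1) ≤ f j := by
  classical
  have hrest : ∑ i ∈ univ.erase j, f i ≤ Fintype.card ι - 1 := by
    have := sum_le_card_nsmul (univ.erase j) f 1 fun i _ => hf i
    rwa [card_erase_of_mem (mem_univ j), card_univ, nsmul_one,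
      Nat.cast_pred (Fintype.card_pos_iff.mpr ⟨j⟩)] at this
  linarith [add_sum_erase univ f (mem_univ j)]

namespace Matrix

variable {m n : Type*} [Fintype m] [Fintype n]

theorem sum_sum_sq_eq_trace_transpose_mul_self {R : Type*} [CommSemiring R] (A : Matrix m n R) :
    ∑ i, ∑ j, A i j ^ 2 = (Aᵀ * A).trace := by
  simp only [trace, diag, mul_apply, transpose_apply, sq]
  exact Finset.sum_comm

theorem trace_transpose_mul_self_sub_of_isStarProjection {P P' : Matrix m m ℝ}
    (hP : IsStarProjection P) (hP' : IsStarProjection P') :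
    ((P - P')ᵀ * (P - P')).trace = P.trace + P'.trace - 2 * (P * P').trace := by
  have hPt : Pᵀ = P := hP.isSelfAdjoint
  have hP't : P'ᵀ = P' := hP'.isSelfAdjoint
  rw [transpose_sub, hPt, hP't, sub_mul, mul_sub, mul_sub, hP.isIdempotentElem.eq,
    hP'.isIdempotentElem.eq, trace_sub, trace_sub, trace_sub, trace_mul_comm P' P]
  ring

variable [DecidableEq n]

theorem isStarProjection_mul_transpose {V : Matrix m n ℝ} (hV : Vᵀ * V = 1) :
    IsStarProjection (V * Vᵀ) where
  isIdempotentElem := by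
    rw [IsIdempotentElem, Matrix.mul_assoc, ← Matrix.mul_assoc Vᵀ, hV, Matrix.one_mul]
  isSelfAdjoint := isHermitian_mul_conjTranspose_self V

theorem posSemidef_one_sub_transpose_mul_self_of_orthonormal [DecidableEq m]
    {Q V : Matrix m n ℝ} (hQ : Qᵀ * Q = 1) (hV : Vᵀ * V = 1) :
    (1 - (Vᵀ * Q)ᵀ * (Vᵀ * Q)).PosSemidef := by
  have hP : (1 - V * Vᵀ).PosSemidef :=
    nonneg_iff_posSemidef.mp (isStarProjection_mul_transpose hV).one_sub_nonneg
  convert hP.conjTranspose_mul_mul_same Q using 1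
  rw [conjTranspose_eq_transpose_of_trivial, Matrix.mul_sub, Matrix.sub_mul, Matrix.mul_one, hQ,
    transpose_mul, transpose_transpose]
  simp only [Matrix.mul_assoc]

theorem IsHermitian.eigenvalues_le_one {A : Matrix n n ℝ} (hA : A.IsHermitian)
    (h : (1 - A).PosSemidef) (i : n) : hA.eigenvalues i ≤ 1 := by
  have hmem : 1 - hA.eigenvalues i ∈ spectrum ℝ (1 - A) := by
    rw [← map_one (algebraMap ℝ (Matrix n n ℝ)), ← spectrum.singleton_sub_eq]
    exact Set.sub_mem_sub rfl (hA.eigenvalues_mem_spectrum_real i)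
  have := (posSemidef_iff_isHermitian_and_spectrum_nonneg.mp h).2 hmem
  simpa using this

theorem IsHermitian.trace_sub_card_sub_one_le_eigenvalues {A : Matrix n n ℝ}
    (hA : A.IsHermitian) (h : (1 - A).PosSemidef) (i : n) :
    A.trace - (Fintype.card n - 1) ≤ hA.eigenvalues i := by
  rw [hA.trace_eq_sum_eigenvalues]
  exact Finset.sum_sub_card_sub_one_le_of_le_one (hA.eigenvalues_le_one h) i

end Matrix

theorem frobNorm_sq {m : ℕ} (A : Matrix (Fin m) (Fin m) ℝ) :
    frobNorm A ^ 2 = (Aᵀ * A).trace := by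
  rw [frobNorm, Real.sq_sqrt (by positivity), sum_sum_sq_eq_trace_transpose_mul_self]

theorem frobNorm_sub_sq_of_orthonormal {n k : ℕ} {Q V : Matrix (Fin n) (Fin k) ℝ}
    (hQ : Qᵀ * Q = 1) (hV : Vᵀ * V = 1) :
    frobNorm (V * Vᵀ - Q * Qᵀ) ^ 2 = 2 * k - 2 * ((Vᵀ * Q)ᵀ * (Vᵀ * Q)).trace := by
  have htrace : ∀ W : Matrix (Fin n) (Fin k) ℝ, Wᵀ * W = 1 → (W * Wᵀ).trace = k := fun W hW => by
    rw [trace_mul_comm, hW, trace_one, Fintype.card_fin]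
  have hcross : (V * Vᵀ * (Q * Qᵀ)).trace = ((Vᵀ * Q)ᵀ * (Vᵀ * Q)).trace := by
    rw [transpose_mul, transpose_transpose, ← Matrix.mul_assoc, trace_mul_comm]
    simp only [Matrix.mul_assoc]
  rw [frobNorm_sq, trace_transpose_mul_self_sub_of_isStarProjection
    (isStarProjection_mul_transpose hV) (isStarProjection_mul_transpose hQ), htrace V hV,
    htrace Q hQ, hcross]
  ring

theorem exists_eigval_eq_eigenvalues {m : ℕ} {A : Matrix (Fin m) (Fin m) ℝ} (hA : A.IsHermitian)
    {j : ℕ} (hj : 0 < j) (hjm : j ≤ m) : ∃ i, eigval A j = hA.eigenvalues i := by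
  rw [eigval, dif_pos hA, dif_pos (by omega)]
  exact ⟨_, rfl⟩

theorem stmt18_general {n k : ℕ} (hk : 0 < k)
    (Q V1 : Matrix (Fin n) (Fin k) ℝ)
    (hQ : Qᵀ * Q = 1) (hV1 : V1ᵀ * V1 = 1) :
    1 - (1 / 2) * frobNorm (V1 * V1ᵀ - Q * Qᵀ) ^ 2 ≤
      eigval ((V1ᵀ * Q)ᵀ * (V1ᵀ * Q)) k := by
  set A := (V1ᵀ * Q)ᵀ * (V1ᵀ * Q)
  have hA : A.IsHermitian := isHermitian_conjTranspose_mul_self _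
  obtain ⟨i, hi⟩ := exists_eigval_eq_eigenvalues hA hk le_rfl
  have hbound := hA.trace_sub_card_sub_one_le_eigenvalues
    (posSemidef_one_sub_transpose_mul_self_of_orthonormal hQ hV1) i
  rw [Fintype.card_fin] at hbound
  rw [hi, frobNorm_sub_sq_of_orthonormal hQ hV1]
  linarith

theorem stmt18 {n k : ℕ} (hk : 0 < k) (hkn : k ≤ n)
    (Q V1 : Matrix (Fin n) (Fin k) ℝ)
    (hQ : Qᵀ * Q = 1) (hV1 : V1ᵀ * V1 = 1) :
    1 - (1 / 2) * frobNorm (V1 * V1ᵀ - Q * Qᵀ) ^ 2 ≤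
      eigval ((V1ᵀ * Q)ᵀ * (V1ᵀ * Q)) k :=
  stmt18_general hk Q V1 hQ hV1
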